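/- arXiv:1508.02661 — 5 statements merged into one kernel-verified Lean document; each statement's English description precedes it below -/
import Mathlib

section
/- Every finite group admitting a left-invariant circular order is cyclic. -/
/-- A circular order (as a set) on `G`: a cocycle `c : G³ → {-1,0,1}`
vanishing exactly on degenerate triples and satisfying the 2-cocycle identity. -/
def IsCircularOrder {G : Type*} (c : G → G → G → ℤ) : Prop :=
  (∀ x y z : G, c x y z = -1 ∨ c x y z = 0 ∨ c x y z = 1) ∧
  (∀ x y z : G, c x y z = 0 ↔ (x = y ∨ y = z ∨ x = z)) ∧
  (∀ g₀ g₁ g₂ g₃ : G, c g₁ g₂ g₃ - c g₀ g₂ g₃ + c g₀ g₁ g₃ - c g₀ g₁ g₂ = 0)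

/-- Invariance of a circular order under left multiplication. -/
def IsLeftInvariant {G : Type*} [Group G] (c : G → G → G → ℤ) : Prop :=
  ∀ g x y z : G, c (g * x) (g * y) (g * z) = c x y z

namespace CircOrderAux

open Finset

variable {G : Type*} [Group G] [Fintype G] [DecidableEq G] {c : G → G → G → ℤ}

/-- The half-open arc from `a` to `b` (contains `a`, not `b`). -/
def arc (c : G → G → G → ℤ) (a b : G) : Finset G :=
  Finset.univ.filter fun z => z ≠ b ∧ (z = a ∨ c a z b = 1)

lemma mem_arc {a b z : G} : z ∈ arc c a b ↔ z ≠ b ∧ (z = a ∨ c a z b = 1) := by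
  simp [arc]

section
variable (hc : IsCircularOrder c)
include hc

lemma c_swap23 (x y z : G) : c x z y = -c x y z := by
  have h := hc.2.2 x y z y
  have h1 : c y z y = 0 := (hc.2.1 y z y).2 (Or.inr (Or.inr rfl))
  have h2 : c x y y = 0 := (hc.2.1 x y y).2 (Or.inr (Or.inl rfl))
  omega

lemma c_swap12 (x y z : G) : c y x z = -c x y z := by
  have h := hc.2.2 x y x z
  have h1 : c x x z = 0 := (hc.2.1 x x z).2 (Or.inl rfl)
  have h2 : c x y x = 0 := (hc.2.1 x y x).2 (Or.inr (Or.inr rfl))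
  omega

lemma c_cyc (x y z : G) : c y z x = c x y z := by
  have h1 := c_swap23 hc y x z
  have h2 := c_swap12 hc x y z
  omega

lemma c_pm {x y z : G} (hxy : x ≠ y) (hyz : y ≠ z) (hxz : x ≠ z) :
    c x y z = 1 ∨ c x y z = -1 := by
  rcases hc.1 x y z with h | h | h
  · exact Or.inr h
  · exact absurd ((hc.2.1 x y z).1 h) (by tauto)
  · exact Or.inl h

lemma ne_of_c_one {x y z : G} (h : c x y z = 1) : x ≠ y ∧ y ≠ z ∧ x ≠ z := by
  refine ⟨fun e => ?_, fun e => ?_, fun e => ?_⟩ <;>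
    [skip; skip; skip] <;>
  · have h0 : c x y z = 0 := (hc.2.1 x y z).2 (by tauto)
    omega

lemma arc_self (a : G) : arc c a a = ∅ := by
  ext z
  simp only [mem_arc, Finset.notMem_empty, iff_false]
  rintro ⟨hz, rfl | hz2⟩
  · exact hz rfl
  · have h0 : c a z a = 0 := (hc.2.1 a z a).2 (Or.inr (Or.inr rfl))
    omega

lemma arc_compl_card {a b : G} (hab : a ≠ b) :
    (arc c a b).card + (arc c b a).card = Fintype.card G := by
  have hdis : Disjoint (arc c a b) (arc c b a) := by
    rw [Finset.disjoint_left]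
    intro z h1 h2
    rw [mem_arc] at h1 h2
    obtain ⟨hzb, h1⟩ := h1
    obtain ⟨hza, h2⟩ := h2
    rcases h1 with rfl | h1
    · exact hza rfl
    rcases h2 with rfl | h2
    · exact hzb rfl
    have e1 : c b z a = c a b z := c_cyc hc a b z
    have e2 : c a b z = -c a z b := c_swap23 hc a z b
    omega
  have huniv : arc c a b ∪ arc c b a = Finset.univ := by
    ext z
    simp only [Finset.mem_union, Finset.mem_univ, iff_true, mem_arc]
    by_cases hza : z = a
    · exact Or.inl ⟨hza ▸ hab, Or.inl hza⟩
    by_cases hzb : z = b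
    · exact Or.inr ⟨hzb ▸ (Ne.symm hab), Or.inl hzb⟩
    rcases c_pm hc (fun e => hza e.symm) hzb hab with h | h
    · exact Or.inl ⟨hzb, Or.inr h⟩
    · have e1 : c b z a = c a b z := c_cyc hc a b z
      have e2 : c a b z = -c a z b := c_swap23 hc a z b
      exact Or.inr ⟨hza, Or.inr (by omega)⟩
  rw [← Finset.card_union_of_disjoint hdis, huniv, Finset.card_univ]

lemma arc_split_card {a b d : G} (h : c a b d = 1) :
    (arc c a b).card + (arc c b d).card = (arc c a d).card := by
  obtain ⟨hab, hbd, had⟩ := ne_of_c_one hc h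
  have key : ∀ z, ((z ∈ arc c a b ∨ z ∈ arc c b d) ↔ z ∈ arc c a d) ∧
      ¬(z ∈ arc c a b ∧ z ∈ arc c b d) := by
    intro z
    simp only [mem_arc]
    by_cases hza : z = a
    · subst hza
      have e1 : c b z d = -c z b d := c_swap12 hc z b d
      have hne : c b z d ≠ 1 := by omega
      tauto
    by_cases hzb : z = b
    · subst hzb
      have hzz : ¬ (z ≠ z) := fun e => e rfl
      have hza' : c a z d = 1 := h
      tauto
    by_cases hzd : z = d
    · subst hzd
      have hzz : ¬ (z ≠ z) := fun e => e rfl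
      have hne : c a z b ≠ 1 := by
        have := c_swap23 hc a b z
        omega
      tauto
    -- generic case
    have p1 := c_pm hc (fun e => hza e.symm) hzb hab
    have p2 := c_pm hc (fun e => hzb e.symm) hzd hbd
    have p3 := c_pm hc (fun e => hza e.symm) hzd had
    have hq := hc.2.2 a b z d
    have e1 : c a b z = -c a z b := c_swap23 hc a z b
    have hiff : ((c a z b = 1 ∨ c b z d = 1) ↔ c a z d = 1) ∧
        ¬(c a z b = 1 ∧ c b z d = 1) := by omega
    constructor
    · constructor
      · rintro (⟨_, rfl | h1⟩ | ⟨_, rfl | h2⟩)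
        · exact absurd rfl hza
        · exact ⟨hzd, Or.inr (hiff.1.1 (Or.inl h1))⟩
        · exact absurd rfl hzb
        · exact ⟨hzd, Or.inr (hiff.1.1 (Or.inr h2))⟩
      · rintro ⟨_, rfl | h3⟩
        · exact absurd rfl hza
        · rcases (hiff.1.2 h3) with h1 | h2
          · exact Or.inl ⟨hzb, Or.inr h1⟩
          · exact Or.inr ⟨hzd, Or.inr h2⟩
    · rintro ⟨⟨_, rfl | h1⟩, ⟨_, rfl | h2⟩⟩
      · exact hza rfl
      · exact hza rfl
      · exact hzb rfl
      · exact hiff.2 ⟨h1, h2⟩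
  have hdis : Disjoint (arc c a b) (arc c b d) := by
    rw [Finset.disjoint_left]
    exact fun z h1 h2 => (key z).2 ⟨h1, h2⟩
  have hU : arc c a b ∪ arc c b d = arc c a d := by
    ext z
    rw [Finset.mem_union]
    exact (key z).1
  rw [← Finset.card_union_of_disjoint hdis, hU]

end

lemma arc_smul_card (hl : IsLeftInvariant c) (g a b : G) :
    (arc c (g * a) (g * b)).card = (arc c a b).card := by
  have himg : (arc c a b).image (fun z => g * z) = arc c (g * a) (g * b) := by
    ext w
    simp only [Finset.mem_image, mem_arc]
    constructor
    · rintro ⟨z, ⟨hzb, hz⟩, rfl⟩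
      refine ⟨fun e => hzb (mul_left_cancel e), ?_⟩
      rcases hz with rfl | hz
      · exact Or.inl rfl
      · exact Or.inr ((hl g a z b).trans hz)
    · rintro ⟨hwb, hw⟩
      refine ⟨g⁻¹ * w, ⟨?_, ?_⟩, mul_inv_cancel_left g w⟩
      · intro e
        apply hwb
        rw [← mul_inv_cancel_left g w, e]
      · rcases hw with rfl | hw
        · exact Or.inl (inv_mul_cancel_left g a)
        · right
          rw [← hl g a (g⁻¹ * w) b, mul_inv_cancel_left]
          exact hw
  rw [← himg, Finset.card_image_of_injective _ (mul_right_injective g)]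

lemma arc_add_mod (hc : IsCircularOrder c) (x y z : G) :
    (((arc c x y).card : ZMod (Fintype.card G)) + (arc c y z).card)
      = (arc c x z).card := by
  by_cases hxy : x = y
  · subst hxy
    rw [arc_self hc, Finset.card_empty, Nat.cast_zero, zero_add]
  by_cases hyz : y = z
  · subst hyz
    rw [arc_self hc, Finset.card_empty, Nat.cast_zero, add_zero]
  by_cases hxz : x = z
  · subst hxz
    rw [arc_self hc, Finset.card_empty, Nat.cast_zero, ← Nat.cast_add,
      arc_compl_card hc hxy, ZMod.natCast_self]
  rcases c_pm hc hxy hyz hxz with h | h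
  · rw [← Nat.cast_add, arc_split_card hc h]
  · have h1 : c z y x = 1 := by
      have e1 : c z y x = c x z y := c_cyc hc x z y
      have e2 : c x z y = -c x y z := c_swap23 hc x y z
      omega
    have h2 := arc_split_card hc h1
    have h3 := arc_compl_card hc hxy
    have h4 := arc_compl_card hc hyz
    have h5 := arc_compl_card hc hxz
    have hnat : (arc c x y).card + (arc c y z).card
        = Fintype.card G + (arc c x z).card := by omega
    rw [← Nat.cast_add, hnat, Nat.cast_add, ZMod.natCast_self, zero_add]

end CircOrderAux

/-- Every finite group admitting a left-invariant circular order is cyclic. -/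
theorem finite_circularlyOrderable_isCyclic {G : Type*} [Group G] [Finite G]
    (c : G → G → G → ℤ) (hc : IsCircularOrder c) (hl : IsLeftInvariant c) :
    IsCyclic G := by
  classical
  cases nonempty_fintype G
  open CircOrderAux in
  set N := Fintype.card G with hN
  let ψ : G → ZMod N := fun g => ((CircOrderAux.arc c 1 g).card : ZMod N)
  have hhom : ∀ g h : G, ψ (g * h) = ψ g + ψ h := by
    intro g h
    have e1 := CircOrderAux.arc_add_mod hc (1 : G) h (g * h)
    have e3 := CircOrderAux.arc_add_mod hc h g (g * h)
    have e2 := CircOrderAux.arc_add_mod hc h (1 : G) g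
    have e4 : (CircOrderAux.arc c g (g * h)).card = (CircOrderAux.arc c 1 h).card := by
      have := CircOrderAux.arc_smul_card hl g 1 h
      rwa [mul_one] at this
    have e5 : ((CircOrderAux.arc c 1 h).card : ZMod N)
        + (CircOrderAux.arc c h 1).card = 0 := by
      by_cases h1 : h = 1
      · subst h1
        rw [CircOrderAux.arc_self hc, Finset.card_empty, Nat.cast_zero, add_zero]
      · rw [← Nat.cast_add, CircOrderAux.arc_compl_card hc (Ne.symm h1), ZMod.natCast_self]
    show ((CircOrderAux.arc c 1 (g * h)).card : ZMod N)
        = ((CircOrderAux.arc c 1 g).card : ZMod N) + (CircOrderAux.arc c 1 h).card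
    rw [← e1, ← e3, ← e2, e4]
    linear_combination e5
  have hlt : ∀ a : G, (CircOrderAux.arc c 1 a).card < N := by
    intro a
    have hnotmem : a ∉ CircOrderAux.arc c 1 a :=
      fun hmem => (CircOrderAux.mem_arc.mp hmem).1 rfl
    have hne' : CircOrderAux.arc c 1 a ≠ Finset.univ :=
      fun e => hnotmem (e ▸ Finset.mem_univ a)
    have := Finset.card_lt_card (Finset.ssubset_univ_iff.mpr hne')
    rwa [Finset.card_univ] at this
  have hinj : Function.Injective ψ := by
    intro g h hgh
    by_contra hne
    have hcard : (CircOrderAux.arc c 1 g).card = (CircOrderAux.arc c 1 h).card := by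
      have hv := congrArg ZMod.val hgh
      rwa [ZMod.val_natCast_of_lt (hlt g), ZMod.val_natCast_of_lt (hlt h)] at hv
    have key : ∀ a b : G, c 1 a b = 1 →
        (CircOrderAux.arc c 1 a).card < (CircOrderAux.arc c 1 b).card := by
      intro a b hab
      have hsplit := CircOrderAux.arc_split_card hc hab
      have hpos : 0 < (CircOrderAux.arc c a b).card := by
        rw [Finset.card_pos]
        exact ⟨a, CircOrderAux.mem_arc.mpr
          ⟨(CircOrderAux.ne_of_c_one hc hab).2.1, Or.inl rfl⟩⟩
      omega
    by_cases hg1 : g = 1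
    · subst hg1
      have hh1 : (1 : G) ∈ CircOrderAux.arc c 1 h :=
        CircOrderAux.mem_arc.mpr ⟨fun e => hne e, Or.inl rfl⟩
      have : 0 < (CircOrderAux.arc c 1 h).card := Finset.card_pos.mpr ⟨1, hh1⟩
      rw [CircOrderAux.arc_self hc, Finset.card_empty] at hcard
      omega
    by_cases hh1 : h = 1
    · subst hh1
      have hg2 : (1 : G) ∈ CircOrderAux.arc c 1 g :=
        CircOrderAux.mem_arc.mpr ⟨fun e => hne e.symm, Or.inl rfl⟩
      have : 0 < (CircOrderAux.arc c 1 g).card := Finset.card_pos.mpr ⟨1, hg2⟩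
      rw [CircOrderAux.arc_self hc, Finset.card_empty] at hcard
      omega
    rcases CircOrderAux.c_pm hc (Ne.symm hg1) hne (Ne.symm hh1) with h1 | h1
    · exact absurd hcard (Nat.ne_of_lt (key g h h1))
    · have h2 : c 1 h g = 1 := by
        have := CircOrderAux.c_swap23 hc 1 g h
        omega
      exact absurd hcard (Nat.ne_of_lt' (key h g h2))
  let φ : G →* Multiplicative (ZMod N) :=
    { toFun := fun g => Multiplicative.ofAdd (ψ g)
      map_one' := by
        show Multiplicative.ofAdd (ψ 1) = 1
        have : ψ 1 = 0 := by
          show ((CircOrderAux.arc c 1 1).card : ZMod N) = 0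
          rw [CircOrderAux.arc_self hc, Finset.card_empty, Nat.cast_zero]
        rw [this]
        rfl
      map_mul' := fun g h => by
        show Multiplicative.ofAdd (ψ (g * h))
          = Multiplicative.ofAdd (ψ g) * Multiplicative.ofAdd (ψ h)
        rw [hhom g h]
        rfl }
  have hφ : Function.Injective φ := by
    intro a b e
    apply hinj
    exact congrArg Multiplicative.toAdd e
  exact isCyclic_of_surjective ((MonoidHom.ofInjective hφ).symm)
    (MulEquiv.surjective _)
end

section
/- Every torsion subgroup of a circularly orderable group with finite torsion subgroup is cyclic; more specifically, if G admits a left-invariant circular order and T ≤ G is a finite subgroup, then T is cyclic. -/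
namespace IsCircularOrder

variable {H : Type*} {c : H → H → H → ℤ}

theorem apply_eq_zero (hc : IsCircularOrder c) {x y z : H} (h : x = y ∨ y = z ∨ x = z) :
    c x y z = 0 :=
  (hc.2.1 x y z).2 h

theorem apply_swap (hc : IsCircularOrder c) (p x y : H) : c p y x = -c p x y := by
  have hcocycle := hc.2.2 p x y x
  have hxyx : c x y x = 0 := hc.apply_eq_zero (by simp)
  have hpxx : c p x x = 0 := hc.apply_eq_zero (by simp)
  linarith

theorem apply_rotate (hc : IsCircularOrder c) (x y z : H) : c y z x = c x y z := by
  have hcocycle := hc.2.2 x y z x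
  have hxzx : c x z x = 0 := hc.apply_eq_zero (by simp)
  have hxyx : c x y x = 0 := hc.apply_eq_zero (by simp)
  linarith

theorem apply_trans (hc : IsCircularOrder c) {p x y z : H} (hxy : c p x y = 1)
    (hyz : c p y z = 1) : c p x z = 1 := by
  have hcocycle := hc.2.2 p x y z
  rcases hc.1 x y z with h | h | h <;> rcases hc.1 p x z with h' | h' | h' <;> linarith

theorem apply_swap_eq_one (hc : IsCircularOrder c) {p x y : H} (hpx : p ≠ x) (hxy : x ≠ y)
    (hpy : p ≠ y) (h : c p x y ≠ 1) : c p y x = 1 := by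
  have h0 : c p x y ≠ 0 := fun h0 => by
    rcases (hc.2.1 p x y).1 h0 with h0 | h0 | h0 <;> contradiction
  rw [hc.apply_swap]
  rcases hc.1 p x y with h' | h' | h' <;> simp_all

theorem wellFounded_apply_eq_one [Finite H] (hc : IsCircularOrder c) (p : H) :
    WellFounded fun x y => c p x y = 1 :=
  haveI : IsTrans H fun x y => c p x y = 1 := ⟨fun _ _ _ => hc.apply_trans⟩
  haveI : Std.Irrefl fun x y => c p x y = 1 :=
    ⟨fun x h => by rw [hc.apply_eq_zero (by simp)] at h; exact zero_ne_one h⟩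
  Finite.wellFounded_of_trans_of_irrefl _

theorem comp {K : Type*} (hc : IsCircularOrder c) {f : K → H} (hf : Function.Injective f) :
    IsCircularOrder fun x y z => c (f x) (f y) (f z) :=
  ⟨fun x y z => hc.1 (f x) (f y) (f z),
    fun x y z => by simp only [hc.2.1, hf.eq_iff],
    fun g₀ g₁ g₂ g₃ => hc.2.2 (f g₀) (f g₁) (f g₂) (f g₃)⟩

end IsCircularOrder

theorem IsLeftInvariant.comp {K H : Type*} [Group K] [Group H] {c : H → H → H → ℤ}
    (hl : IsLeftInvariant c) (f : K →* H) :
    IsLeftInvariant fun x y z => c (f x) (f y) (f z) :=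
  fun g x y z => by simp only [map_mul]; exact hl _ _ _ _

section CircularlyOrderedGroup

variable {H : Type*} [Group H] {c : H → H → H → ℤ}

theorem IsCircularOrder.exists_ne_one_forall_apply_ne_one [Finite H] [Nontrivial H]
    (hc : IsCircularOrder c) : ∃ a ≠ (1 : H), ∀ y, c 1 y a ≠ 1 := by
  obtain ⟨a, ha1, hmin⟩ := (hc.wellFounded_apply_eq_one 1).has_min {y | y ≠ 1} (exists_ne 1)
  refine ⟨a, ha1, fun y hy => ?_⟩
  by_cases hy1 : y = 1
  · rw [hc.apply_eq_zero (Or.inl hy1.symm)] at hy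
    exact zero_ne_one hy
  · exact hmin y hy1 hy

theorem IsLeftInvariant.apply_mul_ne_one (hl : IsLeftInvariant c) {a : H}
    (ha : ∀ y, c 1 y a ≠ 1) (x y : H) : c x y (x * a) ≠ 1 := by
  have h := hl x 1 (x⁻¹ * y) a
  rw [mul_one, mul_inv_cancel_left] at h
  rw [h]
  exact ha _

theorem IsCircularOrder.mem_zpowers [Finite H] (hc : IsCircularOrder c) (hl : IsLeftInvariant c)
    {a : H} (ha1 : a ≠ 1) (ha : ∀ y, c 1 y a ≠ 1) (x : H) : x ∈ Subgroup.zpowers a := by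
  by_contra hx
  obtain ⟨m, hm, hmin⟩ :=
    (hc.wellFounded_apply_eq_one 1).has_min {y | y ∉ Subgroup.zpowers a} ⟨x, hx⟩
  have hm' : m * a⁻¹ ∉ Subgroup.zpowers a := fun h =>
    hm (by simpa using mul_mem h (Subgroup.mem_zpowers a))
  have hm1 : (1 : H) ≠ m := fun h => hm (h ▸ one_mem _)
  have hm'1 : (1 : H) ≠ m * a⁻¹ := fun h => hm' (h ▸ one_mem _)
  have hmm' : m * a⁻¹ ≠ m := by simpa using ha1
  have hbetween : c (m * a⁻¹) 1 m = 1 := by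
    rw [← hc.apply_rotate]
    exact hc.apply_swap_eq_one hm'1 hmm' hm1 (hmin _ hm')
  exact hl.apply_mul_ne_one ha (m * a⁻¹) 1 (by simpa using hbetween)

theorem IsCircularOrder.isCyclic [Finite H] (hc : IsCircularOrder c) (hl : IsLeftInvariant c) :
    IsCyclic H := by
  rcases subsingleton_or_nontrivial H with _ | _
  · infer_instance
  obtain ⟨a, ha1, ha⟩ := hc.exists_ne_one_forall_apply_ne_one
  exact ⟨a, hc.mem_zpowers hl ha1 ha⟩

end CircularlyOrderedGroup

/-- If `G` admits a left-invariant circular order, then every finite subgroup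
of `G` is cyclic. -/
theorem finite_subgroup_of_circularlyOrderable_isCyclic {G : Type*} [Group G]
    (c : G → G → G → ℤ) (hc : IsCircularOrder c) (hl : IsLeftInvariant c)
    (T : Subgroup G) [Finite T] :
    IsCyclic T :=
  (hc.comp Subtype.val_injective).isCyclic (hl.comp T.subtype)
end

section
/- The finite cyclic group ℤ/nℤ (n ≥ 1) admits exactly φ(n) left-invariant circular orders, where φ is Euler's totient function. -/
/-!
Cutting the circle at a point `p` turns a circular order `c` on a finite set into a linear order with
`p` first (`x < y` iff `c p x y = 1`), and by the cocycle identity `c` is determined by the triples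
through `p`. Numbering the points in this linear order therefore carries `c` to the standard
orientation of `{0, …, n-1}`, and any two such numberings differ by a rotation of `ℤ/nℤ`.
If `c` is a left-invariant order on `ℤ/nℤ`, then `e (g + ·)` is again a numbering for every `g`, so
a numbering with `e 0 = 0` is additive: it is multiplication by a unit `u`, and `c` is the pull-back
of the standard orientation along `x ↦ x u`. Distinct units give distinct orders.
-/

open Function

def cyclicSign (a b c : ℕ) : ℤ :=
  if a = b ∨ b = c ∨ a = c then 0
  else if a < b ∧ b < c ∨ b < c ∧ c < a ∨ c < a ∧ a < b then 1 else -1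

theorem cyclicSign_trichotomy (a b c : ℕ) :
    cyclicSign a b c = -1 ∨ cyclicSign a b c = 0 ∨ cyclicSign a b c = 1 := by
  unfold cyclicSign; split_ifs <;> simp

theorem cyclicSign_eq_zero_iff {a b c : ℕ} : cyclicSign a b c = 0 ↔ a = b ∨ b = c ∨ a = c := by
  unfold cyclicSign; split_ifs <;> simp_all

theorem cyclicSign_cocycle (a b c d : ℕ) :
    cyclicSign b c d - cyclicSign a c d + cyclicSign a b d - cyclicSign a b c = 0 := by
  unfold cyclicSign; split_ifs <;> omega

theorem cyclicSign_zero_left_eq_one_iff {a b : ℕ} : cyclicSign 0 a b = 1 ↔ 0 < a ∧ a < b := by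
  unfold cyclicSign; split_ifs <;> simp <;> omega

theorem cyclicSign_add_mod {n a b c k : ℕ} (ha : a < n) (hb : b < n) (hc : c < n) (hk : k < n) :
    cyclicSign ((k + a) % n) ((k + b) % n) ((k + c) % n) = cyclicSign a b c := by
  simp only [Nat.add_mod_eq_ite, Nat.mod_eq_of_lt, ha, hb, hc, hk]
  unfold cyclicSign; split_ifs <;> omega

theorem isCircularOrder_cyclicSign_comp {G : Type*} {f : G → ℕ} (hf : Injective f) :
    IsCircularOrder fun x y z => cyclicSign (f x) (f y) (f z) :=
  ⟨fun _ _ _ => cyclicSign_trichotomy _ _ _,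
    fun _ _ _ => by simp only [cyclicSign_eq_zero_iff, hf.eq_iff],
    fun _ _ _ _ => cyclicSign_cocycle _ _ _ _⟩

namespace IsCircularOrder

variable {G : Type*} {c : G → G → G → ℤ}

theorem trichotomy (hc : IsCircularOrder c) (x y z : G) :
    c x y z = -1 ∨ c x y z = 0 ∨ c x y z = 1 :=
  hc.1 x y z

theorem eq_zero_iff (hc : IsCircularOrder c) {x y z : G} : c x y z = 0 ↔ x = y ∨ y = z ∨ x = z :=
  hc.2.1 x y z

theorem cocycle (hc : IsCircularOrder c) (g₀ g₁ g₂ g₃ : G) :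
    c g₁ g₂ g₃ - c g₀ g₂ g₃ + c g₀ g₁ g₃ - c g₀ g₁ g₂ = 0 :=
  hc.2.2 g₀ g₁ g₂ g₃

theorem swap_right (hc : IsCircularOrder c) (x y z : G) : c x z y = -c x y z := by
  have := hc.cocycle x y z y
  have : c y z y = 0 := hc.eq_zero_iff.2 (by tauto)
  have : c x y y = 0 := hc.eq_zero_iff.2 (by tauto)
  omega

theorem eq_of_forall_base_eq {c' : G → G → G → ℤ} (hc : IsCircularOrder c)
    (hc' : IsCircularOrder c') (p : G) (h : ∀ y z, c p y z = c' p y z) : c = c' := by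
  funext x y z
  have := hc.cocycle p x y z
  have := hc'.cocycle p x y z
  have := h x y; have := h x z; have := h y z
  omega

def BasedLT (c : G → G → G → ℤ) (p x y : G) : Prop := c p x y = 1 ∨ (x = p ∧ y ≠ p)

theorem eq_of_forall_base_eq_one_iff {c' : G → G → G → ℤ} (hc : IsCircularOrder c)
    (hc' : IsCircularOrder c') (p : G) (h : ∀ y z, c p y z = 1 ↔ c' p y z = 1) : c = c' := by
  refine hc.eq_of_forall_base_eq hc' p fun y z => ?_
  have := h y z; have := h z y
  have := hc.swap_right p y z; have := hc'.swap_right p y z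
  have := hc.trichotomy p y z; have := hc'.trichotomy p y z
  omega

theorem isStrictTotalOrder_basedLT (hc : IsCircularOrder c) (p : G) :
    IsStrictTotalOrder G (BasedLT c p) where
  irrefl x := by
    have : c p x x = 0 := hc.eq_zero_iff.2 (by tauto)
    rintro (h | ⟨hx, hx'⟩)
    exacts [by omega, hx' hx]
  trans x y z := by
    rintro (hxy | ⟨hx, hy⟩) (hyz | ⟨hy', hz⟩)
    · left
      have := hc.cocycle p x y z
      have := hc.trichotomy x y z; have := hc.trichotomy p x z
      omega
    · have : c p x p = 0 := hc.eq_zero_iff.2 (by tauto)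
      rw [hy'] at hxy
      omega
    · refine Or.inr ⟨hx, fun hz => ?_⟩
      have : c p y p = 0 := hc.eq_zero_iff.2 (by tauto)
      rw [hz] at hyz
      omega
    · exact absurd hy' hy
  trichotomous x y hxy hyx := by
    by_contra hne
    by_cases hx : x = p
    · exact hxy (Or.inr ⟨hx, fun hy => hne (hx.trans hy.symm)⟩)
    by_cases hy : y = p
    · exact hyx (Or.inr ⟨hy, fun hx' => hne (hx'.trans hy.symm)⟩)
    have : c p x y ≠ 0 := hc.eq_zero_iff.not.2 (by tauto)
    have := hc.trichotomy p x y; have := hc.swap_right p x y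
    simp only [BasedLT, not_or] at hxy hyx
    omega

end IsCircularOrder

def IsNumbering {G : Type*} {n : ℕ} (c : G → G → G → ℤ) (e : G ≃ Fin n) : Prop :=
  ∀ x y z, c x y z = cyclicSign (e x) (e y) (e z)

theorem IsCircularOrder.exists_isNumbering {G : Type*} [Fintype G] {c : G → G → G → ℤ}
    (hc : IsCircularOrder c) (p : G) {n : ℕ} (hn : Fintype.card G = n) :
    ∃ e : G ≃ Fin n, IsNumbering c e ∧ (e p : ℕ) = 0 := by
  classical
  have := hc.isStrictTotalOrder_basedLT p
  let : LinearOrder G := linearOrderOfSTO (BasedLT c p)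
  let e : G ≃o Fin n := (Fintype.orderIsoFinOfCardEq G hn).symm
  have e_lt_iff (x y : G) : e x < e y ↔ BasedLT c p x y := e.lt_iff_lt
  have hp : (e p : ℕ) = 0 := by
    by_contra h
    have h0 : 0 < n := by have := (e p).2; omega
    have := (e_lt_iff p (e.symm ⟨0, h0⟩)).2 (Or.inr ⟨rfl, fun h' => h (by rw [← h']; simp)⟩)
    simp [Fin.lt_def] at this
  have base (y z : G) : c p y z = 1 ↔ cyclicSign (e p) (e y) (e z) = 1 := by
    have hy : y = p ↔ (e y : ℕ) = 0 := by rw [← hp, Fin.val_inj, e.apply_eq_iff_eq]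
    have hpz : c p p z = 0 := hc.eq_zero_iff.2 (Or.inl rfl)
    rw [hp, cyclicSign_zero_left_eq_one_iff, ← Fin.lt_def, e_lt_iff, BasedLT]
    constructor
    · intro h
      refine ⟨Nat.pos_of_ne_zero fun h0 => ?_, Or.inl h⟩
      rw [hy.2 h0] at h; omega
    · rintro ⟨hpos, h | ⟨rfl, -⟩⟩
      · exact h
      · omega
  have hinj : Injective fun x => (e x : ℕ) := Fin.val_injective.comp e.injective
  have := hc.eq_of_forall_base_eq_one_iff (isCircularOrder_cyclicSign_comp hinj) p base
  exact ⟨e.toEquiv, fun x y z => congrFun (congrFun (congrFun this x) y) z, hp⟩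

namespace IsNumbering

variable {G : Type*} {n : ℕ} {c : G → G → G → ℤ} {e e₁ e₂ : G ≃ Fin n}

theorem lt_iff_basedLT (he : IsNumbering c e) {p : G} (hp : (e p : ℕ) = 0) (x y : G) :
    e x < e y ↔ IsCircularOrder.BasedLT c p x y := by
  have hx : x = p ↔ (e x : ℕ) = 0 := by rw [← hp, Fin.val_inj, e.apply_eq_iff_eq]
  have hy : y = p ↔ (e y : ℕ) = 0 := by rw [← hp, Fin.val_inj, e.apply_eq_iff_eq]
  rw [IsCircularOrder.BasedLT, he, hp, cyclicSign_zero_left_eq_one_iff, ne_eq, hx, hy, Fin.lt_def]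
  omega

theorem eq_of_apply_eq_zero (he₁ : IsNumbering c e₁) (he₂ : IsNumbering c e₂) {p : G}
    (hp₁ : (e₁ p : ℕ) = 0) (hp₂ : (e₂ p : ℕ) = 0) : e₁ = e₂ := by
  let σ := e₁.symm.trans e₂
  have hσ : StrictMono σ := fun a b hab => by
    rw [← e₁.apply_symm_apply a, ← e₁.apply_symm_apply b, he₁.lt_iff_basedLT hp₁,
      ← he₂.lt_iff_basedLT hp₂] at hab
    exact hab
  have hσ_id : ⇑σ = id := (hσ.range_inj strictMono_id).1 (by simp [σ.surjective.range_eq])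
  refine Equiv.ext fun x => ?_
  simpa [σ] using (congrFun hσ_id (e₁ x)).symm

theorem trans_addLeft [NeZero n] (he : IsNumbering c e) (k : Fin n) :
    IsNumbering c (e.trans (Equiv.addLeft k)) := by
  intro x y z
  simp only [Equiv.trans_apply, Equiv.coe_addLeft, Fin.val_add]
  rw [cyclicSign_add_mod (e x).2 (e y).2 (e z).2 k.2, he]

theorem sub_eq_sub [NeZero n] (he₁ : IsNumbering c e₁) (he₂ : IsNumbering c e₂) (p x : G) :
    e₁ x - e₁ p = e₂ x - e₂ p := by
  have h := (he₁.trans_addLeft (-e₁ p)).eq_of_apply_eq_zero (he₂.trans_addLeft (-e₂ p))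
    (p := p) (by simp) (by simp)
  simpa [sub_eq_neg_add] using congrArg (· x) h

end IsNumbering

theorem ZMod.val_finEquiv {n : ℕ} [NeZero n] (a : Fin n) : (ZMod.finEquiv n a).val = a := by
  cases n with
  | zero => exact absurd rfl (NeZero.ne 0)
  | succ n => rfl

section ZMod

variable {n : ℕ} [NeZero n]

/-- The circular order of the rotation `x ↦ x u / n mod 1` of the circle. -/
def rotationOrder (u : (ZMod n)ˣ) (x y z : ZMod n) : ℤ :=
  cyclicSign (x * u).val (y * u).val (z * u).val

def unitNumbering (u : (ZMod n)ˣ) : ZMod n ≃ Fin n :=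
  (Units.mulRight u).trans (ZMod.finEquiv n).symm.toEquiv

theorem isNumbering_unitNumbering (u : (ZMod n)ˣ) :
    IsNumbering (rotationOrder u) (unitNumbering u) := by
  intro x y z
  simp only [rotationOrder, unitNumbering, Equiv.trans_apply, Units.mulRight_apply,
    RingEquiv.toEquiv_eq_coe, RingEquiv.coe_toEquiv, ← ZMod.val_finEquiv,
    RingEquiv.apply_symm_apply]

theorem isCircularOrder_rotationOrder (u : (ZMod n)ˣ) : IsCircularOrder (rotationOrder u) :=
  isCircularOrder_cyclicSign_comp ((ZMod.val_injective n).comp (Units.mulRight u).injective)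

theorem isLeftInvariant_rotationOrder (u : (ZMod n)ˣ) :
    IsLeftInvariant (G := Multiplicative (ZMod n)) (rotationOrder u) := by
  intro g x y z
  change rotationOrder u (g.toAdd + x.toAdd) (g.toAdd + y.toAdd) (g.toAdd + z.toAdd) =
    rotationOrder u x.toAdd y.toAdd z.toAdd
  simp only [rotationOrder, add_mul, ZMod.val_add]
  exact cyclicSign_add_mod (ZMod.val_lt _) (ZMod.val_lt _) (ZMod.val_lt _) (ZMod.val_lt _)

theorem rotationOrder_injective : Injective (rotationOrder (n := n)) := by
  intro u v huv
  have h := (isNumbering_unitNumbering u).eq_of_apply_eq_zero (p := 0)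
    (huv ▸ isNumbering_unitNumbering v) (by simp [unitNumbering]) (by simp [unitNumbering])
  exact Units.ext (by simpa [unitNumbering] using congrArg (· 1) h)

theorem exists_rotationOrder_eq {c : ZMod n → ZMod n → ZMod n → ℤ} (hc : IsCircularOrder c)
    (hinv : IsLeftInvariant (G := Multiplicative (ZMod n)) c) : ∃ u, rotationOrder u = c := by
  obtain ⟨e, he, he0⟩ := hc.exists_isNumbering 0 (ZMod.card n)
  have e_zero : e 0 = 0 := Fin.ext (by simpa using he0)
  have e_add (g x : ZMod n) : e (g + x) = e g + e x := by
    have he_g : IsNumbering c ((Equiv.addLeft g).trans e) := fun x y z =>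
      (hinv g x y z).symm.trans (he _ _ _)
    have := he.sub_eq_sub he_g 0 x
    simp only [Equiv.trans_apply, Equiv.coe_addLeft, add_zero, e_zero, sub_zero] at this
    rw [this, add_sub_cancel]
  let ψ : ZMod n ≃+ ZMod n :=
    AddEquiv.mk' (e.trans (ZMod.finEquiv n).toEquiv) fun x y => by simp [e_add]
  have hψ (x : ZMod n) : ψ x = x * ψ 1 := by simpa using ZMod.map_smul ψ x 1
  have hψ_val (x : ZMod n) : (ψ x).val = e x := ZMod.val_finEquiv (e x)
  obtain ⟨w, hw⟩ := ψ.surjective 1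
  have hunit : IsUnit (ψ 1) := IsUnit.of_mul_eq_one w (by rw [mul_comm, ← hψ, hw])
  refine ⟨hunit.unit, funext fun x => funext fun y => funext fun z => ?_⟩
  simp only [rotationOrder, IsUnit.unit_spec, ← hψ, hψ_val, he x y z]

end ZMod

/-- The finite cyclic group `ℤ/nℤ` admits exactly `φ(n)` left-invariant circular
orders, where `φ` is Euler's totient function. -/
theorem card_circularOrders_zmod (n : ℕ) (hn : 1 ≤ n) :
    Nat.card {c : Multiplicative (ZMod n) → Multiplicative (ZMod n) →
        Multiplicative (ZMod n) → ℤ // IsCircularOrder c ∧ IsLeftInvariant c} =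
      Nat.totient n := by
  have : NeZero n := ⟨by omega⟩
  let f : (ZMod n)ˣ → {c : Multiplicative (ZMod n) → Multiplicative (ZMod n) →
        Multiplicative (ZMod n) → ℤ // IsCircularOrder c ∧ IsLeftInvariant c} :=
    fun u => ⟨rotationOrder u, isCircularOrder_rotationOrder u, isLeftInvariant_rotationOrder u⟩
  have hf : Bijective f := by
    refine ⟨fun u v h => rotationOrder_injective (congrArg Subtype.val h), ?_⟩
    rintro ⟨c, hc, hinv⟩
    obtain ⟨u, rfl⟩ := exists_rotationOrder_eq hc hinv
    exact ⟨u, rfl⟩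
  rw [← Nat.card_eq_of_bijective f hf, Nat.card_eq_fintype_card, ZMod.card_units_eq_totient]
end

section
/- The subset LO(G) ⊆ CO(G) consisting of circular orders induced by left-invariant linear orders is a closed subset of CO(G). -/
/-- A left-invariant linear order on a group `G`: a strict total order
invariant under left multiplication. -/
def IsLeftInvariantLinearOrder {G : Type*} [Group G] (lt : G → G → Prop) : Prop :=
  IsStrictTotalOrder G lt ∧ ∀ f a b : G, lt a b → lt (f * a) (f * b)

/-!
A left-invariant linear order `<` inducing `c` is determined by `c`:
`a < b` iff `1 < a⁻¹ * b` iff `c (b⁻¹ * a) 1 (a⁻¹ * b) = 1`. So `c` lies in `LO(G)` iff the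
relation read off from `c` in this way is a strict total order inducing `c`, its left invariance
being automatic. Each of these conditions is an intersection of conditions on finitely many
values of `c`, hence closed in the product topology.
-/

section LocallyConstant

variable {X : Type*} [TopologicalSpace X]

theorem isClosed_setOf_of_isLocallyConstant {p : X → Prop} (hp : IsLocallyConstant p) :
    IsClosed {x | p x} := by
  simpa using hp.isClosed_fiber True

theorem isClosed_setOf_isStrictTotalOrder {α : Type*} {R : X → α → α → Prop}
    (hR : ∀ a b, IsLocallyConstant fun x => R x a b) :
    IsClosed {x | IsStrictTotalOrder α (R x)} := by
  have hiff : ∀ x, IsStrictTotalOrder α (R x) ↔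
      (∀ a b, ¬R x a b → ¬R x b a → a = b) ∧ (∀ a, ¬R x a a) ∧
        ∀ a b d, R x a b → R x b d → R x a d :=
    fun x => ⟨fun h => ⟨h.trichotomous, h.irrefl, h.trans⟩,
      fun ⟨htri, hirr, htr⟩ => { trichotomous := htri, irrefl := hirr, trans := htr }⟩
  simp only [hiff, Set.ofPred_and, Set.ofPred_forall]
  refine .inter (isClosed_iInter fun a => isClosed_iInter fun b => ?_)
    (.inter (isClosed_iInter fun a => ?_)
      (isClosed_iInter fun a => isClosed_iInter fun b => isClosed_iInter fun d => ?_))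
  · exact isClosed_setOf_of_isLocallyConstant
      ((hR a b).comp₂ (hR b a) fun p q => ¬p → ¬q → a = b)
  · exact isClosed_setOf_of_isLocallyConstant ((hR a a).comp Not)
  · exact isClosed_setOf_of_isLocallyConstant
      ((hR a b).comp₂ ((hR b d).comp₂ (hR a d) (· → ·)) (· → ·))

end LocallyConstant

theorem isLocallyConstant_apply_eq {α : Type*} (x y z : α) (n : ℤ) :
    IsLocallyConstant fun c : α → α → α → ℤ => c x y z = n :=
  ((IsLocallyConstant.iff_continuous _).2 (by fun_prop)).comp (· = n)

def IsInducedBy {G : Type*} (c : G → G → G → ℤ) (lt : G → G → Prop) : Prop :=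
  ∀ x y z, c x y z = 1 ↔ (lt x y ∧ lt y z) ∨ (lt y z ∧ lt z x) ∨ (lt z x ∧ lt x y)

section Group

variable {G : Type*} [Group G]

def ltOfCocycle (c : G → G → G → ℤ) (a b : G) : Prop :=
  c (a⁻¹ * b)⁻¹ 1 (a⁻¹ * b) = 1

theorem ltOfCocycle_mul_left (c : G → G → G → ℤ) (f a b : G) :
    ltOfCocycle c (f * a) (f * b) ↔ ltOfCocycle c a b := by
  simp only [ltOfCocycle, mul_inv_rev, mul_assoc, inv_mul_cancel_left]

theorem lt_mul_left_iff {lt : G → G → Prop} (hlt : ∀ f a b, lt a b → lt (f * a) (f * b))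
    (f a b : G) : lt (f * a) (f * b) ↔ lt a b :=
  ⟨fun h => by simpa using hlt f⁻¹ _ _ h, hlt f a b⟩

theorem ltOfCocycle_eq {c : G → G → G → ℤ} {lt : G → G → Prop}
    (hlt : ∀ f a b, lt a b → lt (f * a) (f * b)) (hc : IsInducedBy c lt) :
    ltOfCocycle c = lt := by
  ext a b
  set g := a⁻¹ * b
  have hinv : lt g⁻¹ 1 ↔ lt 1 g := by simpa using (lt_mul_left_iff hlt g g⁻¹ 1).symm
  have hg : lt 1 g ↔ lt a b := by simpa [g] using lt_mul_left_iff hlt a⁻¹ a b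
  rw [ltOfCocycle, hc, hinv, ← hg]
  tauto

theorem isClosed_setOf_isInducedBy_ltOfCocycle :
    IsClosed {c : G → G → G → ℤ | IsInducedBy c (ltOfCocycle c)} := by
  have hlt (a b : G) : IsLocallyConstant fun c => ltOfCocycle c a b :=
    isLocallyConstant_apply_eq _ _ _ 1
  simp only [IsInducedBy, Set.ofPred_forall]
  refine isClosed_iInter fun x => isClosed_iInter fun y => isClosed_iInter fun z => ?_
  exact isClosed_setOf_of_isLocallyConstant <| (isLocallyConstant_apply_eq x y z 1).comp₂
    (((hlt x y).prodMk (hlt y z)).prodMk (hlt z x))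
    fun p q => (p ↔ (q.1.1 ∧ q.1.2) ∨ (q.1.2 ∧ q.2) ∨ (q.2 ∧ q.1.1))

theorem setOf_exists_isInducedBy_eq :
    {c : G → G → G → ℤ | ∃ lt, IsLeftInvariantLinearOrder lt ∧ IsInducedBy c lt} =
      {c | IsStrictTotalOrder G (ltOfCocycle c) ∧ IsInducedBy c (ltOfCocycle c)} := by
  ext c
  constructor
  · rintro ⟨lt, ⟨hto, hlt⟩, hc⟩
    obtain rfl := ltOfCocycle_eq hlt hc
    exact ⟨hto, hc⟩
  · rintro ⟨hto, hc⟩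
    exact ⟨ltOfCocycle c, ⟨hto, fun f a b => (ltOfCocycle_mul_left c f a b).2⟩, hc⟩

theorem isClosed_setOf_exists_isInducedBy :
    IsClosed {c : G → G → G → ℤ | ∃ lt, IsLeftInvariantLinearOrder lt ∧ IsInducedBy c lt} := by
  rw [setOf_exists_isInducedBy_eq, Set.ofPred_and]
  exact (isClosed_setOf_isStrictTotalOrder fun a b => isLocallyConstant_apply_eq _ _ _ 1).inter
    isClosed_setOf_isInducedBy_ltOfCocycle

end Group

/-- The subspace `LO(G) ⊆ CO(G)` of circular orders induced by left-invariant
linear orders is closed in `CO(G)`. -/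
theorem linearOrders_isClosed_in_circularOrders {G : Type*} [Group G] :
    IsClosed {c : {c : G → G → G → ℤ // IsCircularOrder c ∧ IsLeftInvariant c} |
      ∃ lt : G → G → Prop, IsLeftInvariantLinearOrder lt ∧
        ∀ x y z : G, c.val x y z = 1 ↔
          ((lt x y ∧ lt y z) ∨ (lt y z ∧ lt z x) ∨ (lt z x ∧ lt x y))} :=
  isClosed_setOf_exists_isInducedBy.preimage continuous_subtype_val
end

section
/- Let K be a subgroup of a group G with left-orderable K, and suppose the set of left cosets G/K carries a circular order invariant under the left G-action. Then G admits a left-invariant circular order. -/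
/-! The circular order on `G` is `c = cQ ∘ π + δs`, where `π : G → G ⧸ K` and `s x y ∈ {-1, 0, 1}`
compares `x` and `y` in the linear order of their common coset (and is `0` across cosets).
As a coboundary, `δs` preserves the cocycle identity. When the three cosets are distinct `c = cQ`;
otherwise `cQ` vanishes and `δs` is the lexicographic sign read off the coset orders. Both terms
are left invariant because `cQ` is and because `y ↦ g * y` maps `xK` order-preservingly onto
`gxK`. -/

open Classical in
noncomputable def relSign {X : Type*} (r : X → X → Prop) (x y : X) : ℤ :=
  if r x y then 1 else if r y x then -1 else 0

theorem relSign_eq_zero_of_ne {X Q : Type*} {π : X → Q} {r : X → X → Prop}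
    (fiber : ∀ ⦃x y⦄, r x y → π x = π y) {x y : X} (h : π x ≠ π y) : relSign r x y = 0 := by
  simp [relSign, mt (@fiber x y) h, mt (@fiber y x) (Ne.symm h)]

def coboundary {X : Type*} (f : X → X → ℤ) (x y z : X) : ℤ :=
  f y z - f x z + f x y

theorem coboundary_cocycle {X : Type*} (f : X → X → ℤ) (g₀ g₁ g₂ g₃ : X) :
    coboundary f g₁ g₂ g₃ - coboundary f g₀ g₂ g₃ + coboundary f g₀ g₁ g₃
      - coboundary f g₀ g₁ g₂ = 0 := by
  unfold coboundary
  ring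

section Lex

variable {X Q : Type*} {π : X → Q} {r : X → X → Prop}

theorem coboundary_relSign_of_shared_fiber (irrefl : ∀ x, ¬ r x x)
    (trans : ∀ ⦃x y z⦄, r x y → r y z → r x z) (fiber : ∀ ⦃x y⦄, r x y → π x = π y)
    (total : ∀ ⦃x y⦄, π x = π y → r x y ∨ x = y ∨ r y x) {x y z : X}
    (h : π x = π y ∨ π y = π z ∨ π x = π z) :
    let s := coboundary (relSign r) x y z
    (s = -1 ∨ s = 0 ∨ s = 1) ∧ (s = 0 ↔ x = y ∨ y = z ∨ x = z) := by
  unfold coboundary relSign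
  grind

theorem IsCircularOrder.lex {cQ : Q → Q → Q → ℤ} (hcQ : IsCircularOrder cQ)
    (irrefl : ∀ x, ¬ r x x) (trans : ∀ ⦃x y z⦄, r x y → r y z → r x z)
    (fiber : ∀ ⦃x y⦄, r x y → π x = π y) (total : ∀ ⦃x y⦄, π x = π y → r x y ∨ x = y ∨ r y x) :
    IsCircularOrder fun x y z => cQ (π x) (π y) (π z) + coboundary (relSign r) x y z := by
  obtain ⟨range, eq_zero_iff, cocycle⟩ := hcQ
  have key : ∀ x y z : X, let c := cQ (π x) (π y) (π z) + coboundary (relSign r) x y z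
      (c = -1 ∨ c = 0 ∨ c = 1) ∧ (c = 0 ↔ x = y ∨ y = z ∨ x = z) := by
    intro x y z
    by_cases h : π x = π y ∨ π y = π z ∨ π x = π z
    · rw [(eq_zero_iff _ _ _).2 h, zero_add]
      exact coboundary_relSign_of_shared_fiber irrefl trans fiber total h
    · obtain ⟨hxy, hyz, hxz⟩ : π x ≠ π y ∧ π y ≠ π z ∧ π x ≠ π z := by tauto
      have hne : ¬ (x = y ∨ y = z ∨ x = z) := by
        rintro (rfl | rfl | rfl) <;> simp_all
      simp only [coboundary, relSign_eq_zero_of_ne fiber hxy, relSign_eq_zero_of_ne fiber hyz,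
        relSign_eq_zero_of_ne fiber hxz, sub_self, add_zero, iff_false_intro hne]
      exact ⟨range _ _ _, by simpa [eq_zero_iff] using ⟨hxy, hyz, hxz⟩⟩
  refine ⟨fun x y z => (key x y z).1, fun x y z => (key x y z).2, fun g₀ g₁ g₂ g₃ => ?_⟩
  linarith [cocycle (π g₀) (π g₁) (π g₂) (π g₃), coboundary_cocycle (relSign r) g₀ g₁ g₂ g₃]

end Lex

namespace IsLeftInvariantLinearOrder

variable {H : Type*} [Group H] {lt : H → H → Prop} (hlt : IsLeftInvariantLinearOrder lt)
include hlt

theorem one_lt_mul {a b : H} (ha : lt 1 a) (hb : lt 1 b) : lt 1 (a * b) :=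
  hlt.1.trans _ _ _ ha (by simpa using hlt.2 a 1 b hb)

theorem one_lt_inv {a : H} (ha : lt a 1) : lt 1 a⁻¹ := by
  simpa using hlt.2 a⁻¹ a 1 ha

theorem one_lt_or_eq_or_one_lt_inv (a : H) : lt 1 a ∨ a = 1 ∨ lt 1 a⁻¹ := by
  have := hlt.1
  rcases trichotomous_of lt 1 a with h | h | h
  · exact Or.inl h
  · exact Or.inr (Or.inl h.symm)
  · exact Or.inr (Or.inr (hlt.one_lt_inv h))

end IsLeftInvariantLinearOrder

/-- On each coset this is the order of `K` transported along `k ↦ x * k` for any `x` in the coset;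
left invariance of `lt` makes it independent of `x`. -/
def cosetLT {G : Type*} [Group G] (K : Subgroup G) (lt : K → K → Prop) (x y : G) : Prop :=
  ∃ h : x⁻¹ * y ∈ K, lt 1 ⟨x⁻¹ * y, h⟩

namespace cosetLT

variable {G : Type*} [Group G] {K : Subgroup G} {lt : K → K → Prop}

theorem coset_eq {x y : G} (h : cosetLT K lt x y) : (x : G ⧸ K) = y :=
  QuotientGroup.eq.2 h.1

theorem mul_mul_iff (g x y : G) : cosetLT K lt (g * x) (g * y) ↔ cosetLT K lt x y := by
  simp [cosetLT, mul_assoc]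

theorem relSign_mul (g x y : G) :
    relSign (cosetLT K lt) (g * x) (g * y) = relSign (cosetLT K lt) x y := by
  unfold relSign
  rw [mul_mul_iff, mul_mul_iff]

theorem coboundary_relSign_mul (g x y z : G) :
    coboundary (relSign (cosetLT K lt)) (g * x) (g * y) (g * z)
      = coboundary (relSign (cosetLT K lt)) x y z := by
  simp only [coboundary, relSign_mul]

variable (hlt : IsLeftInvariantLinearOrder lt)
include hlt

theorem irrefl (x : G) : ¬ cosetLT K lt x x := by
  rintro ⟨h, hlt1⟩
  simp only [inv_mul_cancel] at hlt1
  exact hlt.1.irrefl 1 hlt1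

theorem trans {x y z : G} (hxy : cosetLT K lt x y) (hyz : cosetLT K lt y z) :
    cosetLT K lt x z := by
  obtain ⟨hxy, hxy'⟩ := hxy
  obtain ⟨hyz, hyz'⟩ := hyz
  refine ⟨by simpa [mul_assoc] using K.mul_mem hxy hyz, ?_⟩
  convert hlt.one_lt_mul hxy' hyz' using 1
  ext; simp [mul_assoc]

theorem trichotomous_of_coset_eq {x y : G} (h : (x : G ⧸ K) = y) :
    cosetLT K lt x y ∨ x = y ∨ cosetLT K lt y x := by
  have hk := QuotientGroup.eq.1 h
  rcases hlt.one_lt_or_eq_or_one_lt_inv ⟨x⁻¹ * y, hk⟩ with h | h | h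
  · exact Or.inl ⟨hk, h⟩
  · exact Or.inr (Or.inl (inv_mul_eq_one.1 (congrArg Subtype.val h)))
  · refine Or.inr (Or.inr ⟨by simpa using K.inv_mem hk, ?_⟩)
    convert h using 1
    ext; simp

end cosetLT

/-- If `K ≤ G` is left-orderable and the coset space `G/K` carries a `G`-invariant
circular order, then `G` admits a left-invariant circular order. -/
theorem circularlyOrderable_of_leftOrderable_stabilizer {G : Type*} [Group G]
    (K : Subgroup G)
    (hK : ∃ lt : K → K → Prop, IsLeftInvariantLinearOrder lt)
    (hQ : ∃ cQ : G ⧸ K → G ⧸ K → G ⧸ K → ℤ, IsCircularOrder cQ ∧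
      ∀ (g : G) (x y z : G ⧸ K), cQ (g • x) (g • y) (g • z) = cQ x y z) :
    ∃ c : G → G → G → ℤ, IsCircularOrder c ∧ IsLeftInvariant c := by
  obtain ⟨lt, hlt⟩ := hK
  obtain ⟨cQ, hcQ, hcQ_inv⟩ := hQ
  refine ⟨_, hcQ.lex (π := QuotientGroup.mk) (cosetLT.irrefl hlt) (fun _ _ _ => cosetLT.trans hlt)
    (fun _ _ => cosetLT.coset_eq) (fun _ _ => cosetLT.trichotomous_of_coset_eq hlt), ?_⟩
  intro g x y z
  dsimp only
  rw [cosetLT.coboundary_relSign_mul]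
  -- `↑(g * x)` is `g • ↑x` by definition
  exact congrArg (· + _) (hcQ_inv g x y z)
end
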